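/- Let D be a nonempty finite set of forbidden patterns, let m be the maximal length of the patterns in D, and let M be the sum of the lengths of the patterns in D. If cap(D) > 0, then cap(D) ≥ 1/(2M + m). -/

import Mathlib

/-- The integer value of a binary symbol. -/
def boolToInt (b : Bool) : ℤ := if b then 1 else 0

/-- Componentwise difference of two binary words, a word over `{-1, 0, +1}`. -/
def diffWord (u v : List Bool) : List ℤ :=
  List.zipWith (fun a b => boolToInt a - boolToInt b) u v

/-- A forbidden pattern: a nonempty finite word over the alphabet `{-1, 0, +1}`. -/
def IsPattern (p : List ℤ) : Prop :=
  p ≠ [] ∧ ∀ x ∈ p, x = -1 ∨ x = 0 ∨ x = 1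

/-- A code `C` of binary words avoids the forbidden set `D` if no difference of two
distinct code words contains a pattern of `D` as a contiguous subword (factor). -/
def AvoidsCode (D : Finset (List ℤ)) (C : Finset (List Bool)) : Prop :=
  ∀ u ∈ C, ∀ v ∈ C, u ≠ v → ∀ p ∈ D, ¬ p <:+: diffWord u v

/-- `delta D n` : the maximal cardinality of a code of binary words of length `n`
avoiding the forbidden set `D`. -/
noncomputable def delta (D : Finset (List ℤ)) (n : ℕ) : ℕ :=
  sSup {k : ℕ | ∃ C : Finset (List Bool),
    (∀ u ∈ C, u.length = n) ∧ AvoidsCode D C ∧ C.card = k}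

/-- The capacity of a set of forbidden difference patterns. -/
noncomputable def cap (D : Finset (List ℤ)) : ℝ :=
  Filter.limsup (fun n : ℕ => Real.logb 2 (delta D n) / n) Filter.atTop

/-!
Two distinct words of a large code agree on their first and last `m` letters, so their
difference is `0^m y 0^m` with `y ≠ 0`, free of the patterns of `D` and of their negatives.
Reading `y` with the Aho–Corasick automaton of these patterns (at most `2M + 1` states) and
cutting out a loop shortens `y` to length at most `2M + 1`. The blocks `y⁺ 0^(m-1)` and
`y⁻ 0^(m-1)` differ by `y 0^(m-1)`, and all their concatenations form a code: a pattern has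
length at most `m`, so it meets at most one nonzero block of a difference. Its rate is
`1 / (|y| + m - 1) ≥ 1 / (2M + m)`.
-/

open Finset

section Automaton

variable {α : Type*} {P : Finset (List α)}

def FactorFree (P : Finset (List α)) (l : List α) : Prop := ∀ p ∈ P, ¬ p <:+: l

theorem FactorFree.mono {l l' : List α} (h : FactorFree P l) (hl : l' <:+: l) :
    FactorFree P l' :=
  fun p hp hpl => h p hp (hpl.trans hl)

variable [DecidableEq α]

def prefixClosure (P : Finset (List α)) : Finset (List α) :=
  P.biUnion fun p => p.inits.toFinset

theorem mem_prefixClosure {l : List α} : l ∈ prefixClosure P ↔ ∃ p ∈ P, l <+: p := by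
  simp [prefixClosure, List.mem_inits]

theorem card_prefixClosure_le (P : Finset (List α)) :
    #(prefixClosure P) ≤ ∑ p ∈ P, p.length + 1 := by
  have hsub : prefixClosure P ⊆ insert [] (P.biUnion fun p => p.inits.toFinset.erase []) := by
    intro l hl
    rw [prefixClosure, mem_biUnion] at hl
    obtain ⟨p, hp, hlp⟩ := hl
    by_cases hl : l = []
    · simp [hl]
    · exact mem_insert_of_mem (mem_biUnion.mpr ⟨p, hp, mem_erase.mpr ⟨hl, hlp⟩⟩)
  have hcard (p : List α) : #(p.inits.toFinset.erase []) ≤ p.length := by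
    rw [card_erase_of_mem (by simp)]
    have := List.toFinset_card_le p.inits
    rw [List.length_inits] at this
    omega
  calc #(prefixClosure P)
      ≤ #(P.biUnion fun p => p.inits.toFinset.erase []) + 1 :=
        (card_le_card hsub).trans (card_insert_le _ _)
    _ ≤ ∑ p ∈ P, p.length + 1 := by
        gcongr
        exact card_biUnion_le.trans (sum_le_sum fun p _ => hcard p)

/-- The longest suffix of `x` that is a prefix of a word of `P`: the state reached by the
Aho–Corasick automaton of `P` after reading `x`. -/
def matchState (P : Finset (List α)) (x : List α) : List α :=
  ((x.tails.filter (· ∈ prefixClosure P)).argmax List.length).getD []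

theorem matchState_suffix (P : Finset (List α)) (x : List α) : matchState P x <:+ x := by
  unfold matchState
  rcases h : (x.tails.filter (· ∈ prefixClosure P)).argmax List.length with _ | s
  · exact List.nil_suffix
  · have := List.argmax_mem h
    simp only [List.mem_filter, List.mem_tails] at this
    exact this.1

theorem suffix_matchState {t x : List α} (ht : t <:+ x) (htP : t ∈ prefixClosure P) :
    t <:+ matchState P x := by
  have hmem : t ∈ x.tails.filter (· ∈ prefixClosure P) := by simp [ht, htP]
  obtain ⟨s, hs⟩ := Option.ne_none_iff_exists'.mp
    (mt (List.argmax_eq_none (f := List.length)).mp (List.ne_nil_of_mem hmem))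
  have hsx : s <:+ x := by simpa [matchState, hs] using matchState_suffix P x
  rw [matchState, hs, Option.getD_some]
  rcases List.suffix_or_suffix_of_suffix ht hsx with h | h
  · exact h
  · rw [h.eq_of_length_le (List.le_of_mem_argmax hmem hs)]

theorem matchState_mem (hP : P.Nonempty) (x : List α) : matchState P x ∈ prefixClosure P := by
  unfold matchState
  rcases h : (x.tails.filter (· ∈ prefixClosure P)).argmax List.length with _ | s
  · obtain ⟨p, hp⟩ := hP
    exact mem_prefixClosure.mpr ⟨p, hp, List.nil_prefix⟩
  · simpa using (List.mem_filter.mp (List.argmax_mem h)).2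

theorem suffix_append_iff_suffix_matchState_append {t x z : List α}
    (ht : t ∈ prefixClosure P) : t <:+ x ++ z ↔ t <:+ matchState P x ++ z := by
  refine ⟨fun h => ?_, fun h => h.trans ((List.suffix_append_inj_of_length_eq rfl).mpr
    ⟨matchState_suffix P x, rfl⟩)⟩
  rcases List.suffix_or_suffix_of_suffix h (List.suffix_append x z) with h' | ⟨t₁, rfl⟩
  · exact h'.trans (List.suffix_append _ z)
  · have ht₁ : t₁ <:+ x := ((List.suffix_append_inj_of_length_eq rfl).mp h).1
    have ht₁P : t₁ ∈ prefixClosure P := by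
      obtain ⟨p, hp, htp⟩ := mem_prefixClosure.mp ht
      exact mem_prefixClosure.mpr ⟨p, hp, (List.prefix_append t₁ z).trans htp⟩
    exact (List.suffix_append_inj_of_length_eq rfl).mpr ⟨suffix_matchState ht₁ ht₁P, rfl⟩

theorem FactorFree.append_of_matchState_eq {x x' z : List α}
    (hst : matchState P x = matchState P x') (hx : FactorFree P x)
    (hx' : FactorFree P (x' ++ z)) : FactorFree P (x ++ z) := by
  intro p hp hpxz
  rcases List.infix_append_iff.mp hpxz with h | h | ⟨l₁, l₂, rfl, hl₁, hl₂⟩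
  · exact hx p hp h
  · exact hx' p hp (h.trans (List.suffix_append x' z).isInfix)
  · have hpP : l₁ ++ l₂ ∈ prefixClosure P := mem_prefixClosure.mpr ⟨_, hp, List.prefix_refl _⟩
    have h₁ : l₁ ++ l₂ <:+ x' ++ l₂ := by
      rw [suffix_append_iff_suffix_matchState_append hpP, ← hst,
        ← suffix_append_iff_suffix_matchState_append hpP]
      exact (List.suffix_append_inj_of_length_eq rfl).mpr ⟨hl₁, rfl⟩
    exact hx' _ hp (h₁.isInfix.trans ((List.prefix_append_right_inj x').mpr hl₂).isInfix)

theorem FactorFree.cut {l y r : List α} {i j : ℕ} (hfree : FactorFree P (l ++ y ++ r))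
    (hst : matchState P (l ++ y.take i) = matchState P (l ++ y.take j)) :
    FactorFree P (l ++ (y.take i ++ y.drop j) ++ r) := by
  have hx : FactorFree P (l ++ y.take i) := hfree.mono <| List.IsPrefix.isInfix <| by
    simpa only [List.append_assoc] using
      (List.prefix_append_right_inj l).mpr ((List.take_prefix i y).trans (List.prefix_append y r))
  have hx' : FactorFree P ((l ++ y.take j) ++ (y.drop j ++ r)) := by
    rw [List.append_assoc l, ← List.append_assoc (y.take j), List.take_append_drop,
      ← List.append_assoc]
    exact hfree
  simpa only [List.append_assoc] using hx.append_of_matchState_eq hst hx'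

theorem exists_lt_matchState_eq (hP : P.Nonempty) (l y : List α)
    (hy : #(prefixClosure P) < y.length + 1) :
    ∃ i j, i < j ∧ j ≤ y.length ∧ matchState P (l ++ y.take i) = matchState P (l ++ y.take j) := by
  obtain ⟨i, hi, j, hj, hij, heq⟩ := exists_ne_map_eq_of_card_lt_of_maps_to
    (s := range (y.length + 1)) (by simpa using hy)
    (fun i _ => matchState_mem hP (l ++ y.take i))
  simp only [mem_range] at hi hj
  rcases lt_or_gt_of_ne hij with h | h
  · exact ⟨i, j, h, by omega, heq⟩
  · exact ⟨j, i, h, by omega, heq.symm⟩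

end Automaton

theorem infix_replicate_append_flatten {α : Type*} {c : α} {k : ℕ} {p : List α}
    (hp : p.length ≤ k + 1) : ∀ zs : List (List α),
    p <:+: List.replicate k c ++ (zs.map (· ++ List.replicate k c)).flatten →
      p <:+: List.replicate k c ∨ ∃ z ∈ zs, p <:+: List.replicate k c ++ z ++ List.replicate k c
  | [], h => Or.inl (by simpa using h)
  | z :: zs, h => by
    have hrec (h' : p <:+: List.replicate k c ++ (zs.map (· ++ List.replicate k c)).flatten) :
        p <:+: List.replicate k c ∨
          ∃ z' ∈ z :: zs, p <:+: List.replicate k c ++ z' ++ List.replicate k c :=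
      (infix_replicate_append_flatten hp zs h').imp_right
        fun ⟨z', hz', h''⟩ => ⟨z', List.mem_cons_of_mem z hz', h''⟩
    rw [List.map_cons, List.flatten_cons, ← List.append_assoc, ← List.append_assoc] at h
    rcases List.infix_append_iff_ne_nil.mp h with h | h | ⟨l₁, l₂, -, hl₂, rfl, hl₁, hl₂'⟩
    · exact Or.inr ⟨z, List.mem_cons_self, h⟩
    · exact hrec (h.trans (List.suffix_append _ _).isInfix)
    · have hl₁k : l₁.length ≤ k := by
        have := List.length_pos_iff.mpr hl₂
        simp only [List.length_append] at hp
        omega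
      have hl₁c : l₁ <:+ List.replicate k c := by
        rcases List.suffix_or_suffix_of_suffix hl₁ (List.suffix_append _ _) with h' | h'
        · exact h'
        · rw [h'.eq_of_length_le (by simpa using hl₁k)]
      exact hrec (List.infix_append_iff.mpr (Or.inr (Or.inr ⟨l₁, l₂, rfl, hl₁c, hl₂'⟩)))

section Padding

variable {α : Type*} [Zero α]

def pad (k : ℕ) (y : List α) : List α := List.replicate k 0 ++ y ++ List.replicate k 0

theorem pad_infix_pad {k m : ℕ} (h : k ≤ m) (y : List α) : pad k y <:+: pad m y := by
  obtain ⟨d, rfl⟩ := Nat.exists_eq_add_of_le h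
  refine ⟨List.replicate d 0, List.replicate d 0, ?_⟩
  have hc : List.replicate k (0 : α) ++ List.replicate d 0 =
      List.replicate d 0 ++ List.replicate k 0 := by
    simp only [List.replicate_append_replicate, Nat.add_comm]
  rw [pad, pad, List.replicate_add]
  nth_rewrite 1 [hc]
  simp only [List.append_assoc]

variable {P : Finset (List α)}

theorem FactorFree.flatten_map_append_replicate {ι : Type*} {k : ℕ}
    (hP : ∀ p ∈ P, p.length ≤ k + 1) (h0 : FactorFree P (List.replicate k 0)) {l : List ι}
    {f : ι → List α} (hf : ∀ i ∈ l, FactorFree P (pad k (f i))) :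
    FactorFree P (l.map fun i => f i ++ List.replicate k 0).flatten := by
  intro p hp hpw
  have hpw' : p <:+: ((l.map f).map (· ++ List.replicate k 0)).flatten := by
    rw [List.map_map]
    exact hpw
  rcases infix_replicate_append_flatten (hP p hp) _ (hpw'.trans (List.suffix_append _ _).isInfix)
    with h | ⟨z, hz, h⟩
  · exact h0 p hp h
  · obtain ⟨i, hi, rfl⟩ := List.mem_map.mp hz
    exact hf i hi p hp h

variable [DecidableEq α]

theorem exists_short_sublist_factorFree_pad (hP : P.Nonempty) (m : ℕ) (y : List α)
    (hy : ∃ x ∈ y, x ≠ 0) (hfree : FactorFree P (pad m y)) :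
    ∃ y', y'.Sublist y ∧ (∃ x ∈ y', x ≠ 0) ∧ FactorFree P (pad m y') ∧
      y'.length ≤ #(prefixClosure P) := by
  induction hn : y.length using Nat.strong_induction_on generalizing y with
  | _ n ih =>
  obtain rfl | ⟨y₁, x, rfl⟩ := y.eq_nil_or_concat
  · simp at hy
  rw [List.concat_eq_append] at hy hfree hn ⊢
  -- Trailing zeros go first, so that the last letter, which every cut below keeps, is nonzero.
  by_cases hx : x = 0
  · subst hx
    have hy₁ : ∃ x ∈ y₁, x ≠ 0 := by simpa using hy
    have hfree₁ : FactorFree P (pad m y₁) :=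
      hfree.mono ⟨[], [0], by simp [pad, ← List.replicate_succ', List.replicate_succ]⟩
    obtain ⟨y', hsub, h⟩ := ih y₁.length (by simp [← hn]) y₁ hy₁ hfree₁ rfl
    exact ⟨y', hsub.trans (List.sublist_append_left _ _), h⟩
  by_cases hlen : (y₁ ++ [x]).length ≤ #(prefixClosure P)
  · exact ⟨_, List.Sublist.refl _, hy, hfree, hlen⟩
  rw [List.length_append, List.length_singleton] at hlen
  obtain ⟨i, j, hij, hj, hst⟩ :=
    exists_lt_matchState_eq hP (List.replicate m 0) y₁ (by omega)
  have hcut := (show FactorFree P (List.replicate m 0 ++ y₁ ++ ([x] ++ List.replicate m 0)) by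
    simpa [pad] using hfree).cut hst
  obtain ⟨y', hsub, h⟩ := ih _ (by simp [← hn]; omega) (y₁.take i ++ y₁.drop j ++ [x])
    ⟨x, by simp, hx⟩ (by simpa [pad] using hcut) rfl
  refine ⟨y', hsub.trans (List.Sublist.append_right ?_ [x]), h⟩
  simpa only [List.take_append_drop] using
    (List.Sublist.refl (y₁.take i)).append (y₁.drop_sublist_drop_left hij.le)

end Padding

theorem diffWord_self (u : List Bool) : diffWord u u = List.replicate u.length 0 := by
  simp [diffWord, List.zipWith_self]

theorem diffWord_append {u v u' v' : List Bool} (h : u.length = v.length) :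
    diffWord (u ++ u') (v ++ v') = diffWord u v ++ diffWord u' v' :=
  List.zipWith_append h

theorem diffWord_comm (u v : List Bool) : diffWord v u = (diffWord u v).map Neg.neg := by
  simp only [diffWord, List.map_zipWith, neg_sub]
  exact List.zipWith_comm

theorem mem_diffWord : ∀ {u v : List Bool} {x : ℤ}, x ∈ diffWord u v → x = -1 ∨ x = 0 ∨ x = 1
  | [], _, _, h => by simp [diffWord] at h
  | _ :: _, [], _, h => by simp [diffWord] at h
  | a :: u, b :: v, x, h => by
    simp only [diffWord, List.zipWith_cons_cons, List.mem_cons] at h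
    rcases h with rfl | h
    · cases a <;> cases b <;> simp [boolToInt]
    · exact mem_diffWord h

theorem eq_of_diffWord_eq_zero : ∀ {u v : List Bool}, u.length = v.length →
    (∀ x ∈ diffWord u v, x = 0) → u = v
  | [], [], _, _ => rfl
  | a :: u, b :: v, hlen, h => by
    simp only [diffWord, List.zipWith_cons_cons, List.mem_cons, forall_eq_or_imp] at h
    have hab : a = b := by cases a <;> cases b <;> simp_all [boolToInt]
    rw [hab, eq_of_diffWord_eq_zero (by simpa using hlen) h.2]

theorem diffWord_map_decide {y : List ℤ} (hy : ∀ x ∈ y, x = -1 ∨ x = 0 ∨ x = 1) :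
    diffWord (y.map (· = 1)) (y.map (· = -1)) = y := by
  rw [diffWord, List.zipWith_map, List.zipWith_self]
  conv_rhs => rw [← List.map_id y]
  refine List.map_congr_left fun x hx => ?_
  rcases hy x hx with rfl | rfl | rfl <;> simp [boolToInt]

theorem diffWord_flatMap {β : Type*} {f : β → List Bool}
    (hf : ∀ b b', (f b).length = (f b').length) :
    ∀ {bs bs' : List β}, bs.length = bs'.length →
      diffWord (bs.flatMap f) (bs'.flatMap f) =
        ((bs.zip bs').map fun bb => diffWord (f bb.1) (f bb.2)).flatten
  | [], [], _ => rfl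
  | b :: bs, b' :: bs', h => by
    simp only [List.flatMap_cons, List.zip_cons_cons, List.map_cons, List.flatten_cons]
    rw [diffWord_append (hf b b'), diffWord_flatMap hf (by simpa using h)]

theorem List.flatMap_inj_of_length_eq {β γ : Type*} {f : β → List γ} (hf : f.Injective)
    (hlen : ∀ b b', (f b).length = (f b').length) :
    ∀ {bs bs' : List β}, bs.length = bs'.length → bs.flatMap f = bs'.flatMap f → bs = bs'
  | [], [], _, _ => rfl
  | b :: bs, b' :: bs', h, heq => by
    simp only [List.flatMap_cons] at heq
    obtain ⟨h₁, h₂⟩ := List.append_inj heq (hlen b b')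
    rw [hf h₁, List.flatMap_inj_of_length_eq hf hlen (by simpa using h) h₂]

section SignedPatterns

def signedPatterns (D : Finset (List ℤ)) : Finset (List ℤ) := D ∪ D.image (List.map Neg.neg)

variable {D : Finset (List ℤ)}

theorem factorFree_signedPatterns_iff {l : List ℤ} :
    FactorFree (signedPatterns D) l ↔ FactorFree D l ∧ FactorFree D (l.map Neg.neg) := by
  have hneg (q : List ℤ) : q.map Neg.neg <:+: l ↔ q <:+: l.map Neg.neg := by
    refine ⟨fun h => ?_, fun h => ?_⟩
    · simpa using h.map Neg.neg
    · simpa using h.map Neg.neg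
  simp only [FactorFree, signedPatterns, Finset.mem_union, Finset.mem_image, or_imp,
    forall_and, forall_exists_index, and_imp, forall_apply_eq_imp_iff₂, hneg]

theorem FactorFree.map_neg {l : List ℤ} (h : FactorFree (signedPatterns D) l) :
    FactorFree (signedPatterns D) (l.map Neg.neg) := by
  rw [factorFree_signedPatterns_iff] at h ⊢
  simpa using h.symm

theorem length_le_of_mem_signedPatterns {m : ℕ} (hD : ∀ p ∈ D, p.length ≤ m) {p : List ℤ}
    (hp : p ∈ signedPatterns D) : p.length ≤ m := by
  simp only [signedPatterns, Finset.mem_union, Finset.mem_image] at hp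
  rcases hp with hp | ⟨q, hq, rfl⟩
  · exact hD p hp
  · simpa using hD q hq

theorem sum_length_signedPatterns_le :
    ∑ p ∈ signedPatterns D, p.length ≤ 2 * ∑ p ∈ D, p.length := by
  have himage : ∑ p ∈ D.image (List.map Neg.neg), p.length = ∑ p ∈ D, p.length := by
    rw [Finset.sum_image fun _ _ _ _ h => List.map_injective_iff.mpr neg_injective h]
    simp
  have := Finset.sum_union_inter (s₁ := D) (s₂ := D.image (List.map Neg.neg))
    (f := List.length)
  rw [signedPatterns]
  omega

end SignedPatterns

section Delta

variable {D : Finset (List ℤ)} {n : ℕ}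

theorem card_le_two_pow {C : Finset (List Bool)} (hC : ∀ u ∈ C, u.length = n) :
    #C ≤ 2 ^ n := by
  have hsub : C ⊆ (Finset.univ : Finset (List.Vector Bool n)).map
      ⟨List.Vector.toList, List.Vector.toList_injective⟩ :=
    fun u hu => Finset.mem_map.mpr ⟨⟨u, hC u hu⟩, Finset.mem_univ _, rfl⟩
  simpa using Finset.card_le_card hsub

theorem bddAbove_codeCards (D : Finset (List ℤ)) (n : ℕ) :
    BddAbove {k : ℕ | ∃ C : Finset (List Bool),
      (∀ u ∈ C, u.length = n) ∧ AvoidsCode D C ∧ C.card = k} :=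
  ⟨2 ^ n, by rintro k ⟨C, hC, -, rfl⟩; exact card_le_two_pow hC⟩

theorem card_le_delta {C : Finset (List Bool)} (hC : ∀ u ∈ C, u.length = n)
    (hCD : AvoidsCode D C) : #C ≤ delta D n :=
  le_csSup (bddAbove_codeCards D n) ⟨C, hC, hCD, rfl⟩

theorem exists_code_card_eq_delta (D : Finset (List ℤ)) (n : ℕ) :
    ∃ C : Finset (List Bool), (∀ u ∈ C, u.length = n) ∧ AvoidsCode D C ∧ #C = delta D n := by
  refine Nat.sSup_mem ?_ (bddAbove_codeCards D n)
  exact ⟨0, ∅, by simp, by simp [AvoidsCode], rfl⟩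

theorem one_le_delta (D : Finset (List ℤ)) (n : ℕ) : 1 ≤ delta D n :=
  card_le_delta (C := {List.replicate n false}) (by simp)
    (by simp +contextual [AvoidsCode])

theorem delta_le_two_pow (D : Finset (List ℤ)) (n : ℕ) : delta D n ≤ 2 ^ n := by
  obtain ⟨C, hC, -, hcard⟩ := exists_code_card_eq_delta D n
  exact hcard ▸ card_le_two_pow hC

theorem logb_delta_nonneg (D : Finset (List ℤ)) (n : ℕ) : 0 ≤ Real.logb 2 (delta D n) :=
  Real.logb_nonneg one_lt_two (by exact_mod_cast one_le_delta D n)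

theorem logb_delta_le (D : Finset (List ℤ)) (n : ℕ) : Real.logb 2 (delta D n) ≤ n := by
  have h := (Real.logb_le_logb one_lt_two (by exact_mod_cast one_le_delta D n)
    (by positivity)).mpr (show (delta D n : ℝ) ≤ 2 ^ n by exact_mod_cast delta_le_two_pow D n)
  rwa [Real.logb_pow, Real.logb_self_eq_one one_lt_two, mul_one] at h

/-- If `delta D` were bounded, `log₂ (delta D n) / n` would tend to `0`. -/
theorem exists_lt_delta_of_cap_pos (hcap : 0 < cap D) (K : ℕ) : ∃ n, K < delta D n := by
  by_contra! hK
  have hle (n : ℕ) : Real.logb 2 (delta D n) / n ≤ Real.logb 2 K / n := by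
    gcongr
    · exact one_lt_two
    · exact_mod_cast one_le_delta D n
    · exact_mod_cast hK n
  have hlim : Filter.Tendsto (fun n : ℕ => Real.logb 2 (delta D n) / n) Filter.atTop (nhds 0) :=
    squeeze_zero (fun n => div_nonneg (logb_delta_nonneg D n) n.cast_nonneg) hle
      (tendsto_const_div_atTop_nhds_zero_nat _)
  rw [cap, hlim.limsup_eq] at hcap
  exact hcap.false

theorem le_cap_of_two_pow_le_delta {L : ℕ} (hL : 0 < L) (h : ∀ t, 2 ^ t ≤ delta D (t * L)) :
    1 / (L : ℝ) ≤ cap D := by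
  have hbdd : Filter.IsBoundedUnder (· ≤ ·) Filter.atTop
      (fun n : ℕ => Real.logb 2 (delta D n) / n) :=
    Filter.isBoundedUnder_of ⟨1, fun n => div_le_one_of_le₀ (logb_delta_le D n) n.cast_nonneg⟩
  refine Filter.le_limsup_of_frequently_le (Filter.frequently_atTop.mpr fun N => ?_) hbdd
  refine ⟨(N + 1) * L, by nlinarith, ?_⟩
  have hlog : ((N + 1 : ℕ) : ℝ) ≤ Real.logb 2 (delta D ((N + 1) * L)) := by
    rw [Real.le_logb_iff_rpow_le one_lt_two (by exact_mod_cast one_le_delta D _)]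
    exact_mod_cast h (N + 1)
  rw [le_div_iff₀ (by positivity)]
  calc 1 / (L : ℝ) * (((N + 1) * L : ℕ) : ℝ) = ((N + 1 : ℕ) : ℝ) := by
        push_cast; field_simp
    _ ≤ _ := hlog

end Delta

theorem List.take_append_drop_take_append_drop {α : Type*} {m : ℕ} (u : List α)
    (h : 2 * m ≤ u.length) :
    u.take m ++ (u.drop m).take (u.length - 2 * m) ++ u.drop (u.length - m) = u := by
  have hdrop : (u.drop m).drop (u.length - 2 * m) = u.drop (u.length - m) := by
    rw [List.drop_drop]; congr 1; omega
  rw [List.append_assoc, ← hdrop, List.take_append_drop, List.take_append_drop]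

theorem exists_ne_take_eq_drop_eq {C : Finset (List Bool)} {n m : ℕ}
    (hC : ∀ u ∈ C, u.length = n) (hcard : 4 ^ m < #C) :
    ∃ u ∈ C, ∃ v ∈ C, u ≠ v ∧ 2 * m ≤ n ∧ u.take m = v.take m ∧
      u.drop (n - m) = v.drop (n - m) := by
  have hmn : 2 * m ≤ n := by
    have : 2 ^ (2 * m) < 2 ^ n := by rw [pow_mul]; exact hcard.trans_le (card_le_two_pow hC)
    exact ((Nat.pow_lt_pow_iff_right (by norm_num)).mp this).le
  have himage (f : List Bool → List Bool) (hf : ∀ u ∈ C, (f u).length = m) :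
      #(C.image f) ≤ 2 ^ m :=
    card_le_two_pow fun w hw => by
      obtain ⟨u, hu, rfl⟩ := Finset.mem_image.mp hw
      exact hf u hu
  have hprod : #(C.image (List.take m) ×ˢ C.image (List.drop (n - m))) < #C := by
    rw [Finset.card_product]
    calc _ ≤ 2 ^ m * 2 ^ m := Nat.mul_le_mul
          (himage _ fun u hu => by simp [hC u hu]; omega)
          (himage _ fun u hu => by simp [hC u hu]; omega)
      _ = 4 ^ m := by rw [← mul_pow]; norm_num
      _ < #C := hcard
  obtain ⟨u, hu, v, hv, huv, heq⟩ := Finset.exists_ne_map_eq_of_card_lt_of_maps_to hprod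
    (f := fun u => (u.take m, u.drop (n - m)))
    fun u hu => Finset.mem_product.mpr ⟨Finset.mem_image_of_mem _ hu, Finset.mem_image_of_mem _ hu⟩
  simp only [Prod.mk.injEq] at heq
  exact ⟨u, hu, v, hv, huv, hmn, heq⟩

theorem diffWord_eq_pad {u v : List Bool} {n m : ℕ} (hu : u.length = n) (hv : v.length = n)
    (hmn : 2 * m ≤ n) (htake : u.take m = v.take m) (hdrop : u.drop (n - m) = v.drop (n - m)) :
    diffWord u v =
      pad m (diffWord ((u.drop m).take (n - 2 * m)) ((v.drop m).take (n - 2 * m))) := by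
  conv_lhs => rw [← u.take_append_drop_take_append_drop (hu ▸ hmn),
    ← v.take_append_drop_take_append_drop (hv ▸ hmn)]
  rw [hu, hv, htake, hdrop, diffWord_append (by simp [hu, hv]),
    diffWord_append (by simp [hv]), diffWord_self, diffWord_self]
  simp only [pad, List.length_take, List.length_drop, hv]
  rw [min_eq_left (by omega), Nat.sub_sub_self (by omega)]

/-- A positive capacity yields two distinct codewords whose difference is `pad m y`. -/
theorem exists_factorFree_pad_of_cap_pos {D : Finset (List ℤ)} (hcap : 0 < cap D) (m : ℕ) :
    ∃ y : List ℤ, (∃ x ∈ y, x ≠ 0) ∧ (∀ x ∈ y, x = -1 ∨ x = 0 ∨ x = 1) ∧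
      FactorFree (signedPatterns D) (pad m y) := by
  obtain ⟨n, hn⟩ := exists_lt_delta_of_cap_pos hcap (4 ^ m)
  obtain ⟨C, hC, hCD, hcard⟩ := exists_code_card_eq_delta D n
  obtain ⟨u, hu, v, hv, huv, hmn, htake, hdrop⟩ :=
    exists_ne_take_eq_drop_eq hC (hcard ▸ hn)
  have hpad := diffWord_eq_pad (hC u hu) (hC v hv) hmn htake hdrop
  refine ⟨diffWord ((u.drop m).take (n - 2 * m)) ((v.drop m).take (n - 2 * m)), ?_,
    fun x hx => mem_diffWord hx, ?_⟩
  · by_contra! h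
    refine huv (eq_of_diffWord_eq_zero ((hC u hu).trans (hC v hv).symm) fun x hx => ?_)
    simp only [hpad, pad, List.mem_append, List.mem_replicate] at hx
    rcases hx with (⟨-, rfl⟩ | hx) | ⟨-, rfl⟩
    · rfl
    · exact h x hx
    · rfl
  · rw [← hpad, factorFree_signedPatterns_iff, ← diffWord_comm]
    exact ⟨hCD u hu v hv huv, hCD v hv u hu huv.symm⟩

section Code

/-- One block of the code built from a ternary word `y`: `true` marks the `+1` entries of `y`,
`false` its `-1` entries, so that the two blocks differ by `y`. -/
def codeBlock (y : List ℤ) (k : ℕ) (b : Bool) : List Bool :=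
  y.map (fun x => decide (x = if b then 1 else -1)) ++ List.replicate k false

variable {y : List ℤ} {k : ℕ}

theorem length_codeBlock (b : Bool) : (codeBlock y k b).length = y.length + k := by
  simp [codeBlock]

theorem diffWord_codeBlock (hy : ∀ x ∈ y, x = -1 ∨ x = 0 ∨ x = 1) (b b' : Bool) :
    diffWord (codeBlock y k b) (codeBlock y k b') =
      (if b = b' then List.replicate y.length 0 else if b then y else y.map Neg.neg) ++
        List.replicate k 0 := by
  rw [codeBlock, codeBlock, diffWord_append (by simp), diffWord_self, List.length_replicate]
  congr 1
  cases b <;> cases b'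
  · simp [diffWord_self]
  · rw [diffWord_comm]
    simp [diffWord_map_decide hy]
  · simpa using diffWord_map_decide hy
  · simp [diffWord_self]

theorem codeBlock_injective (hy0 : ∃ x ∈ y, x ≠ 0) (hy : ∀ x ∈ y, x = -1 ∨ x = 0 ∨ x = 1) :
    (codeBlock y k).Injective := by
  intro b b' h
  by_contra hne
  obtain ⟨x, hx, hx0⟩ := hy0
  have hdiff := diffWord_codeBlock (k := k) hy b b'
  rw [h, diffWord_self, length_codeBlock, List.replicate_add, if_neg hne] at hdiff
  have hz := List.append_inj_left' hdiff rfl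
  split_ifs at hz
  · rw [← hz] at hx
    exact hx0 (List.eq_of_mem_replicate hx)
  · have hnx := List.mem_map_of_mem (f := Neg.neg) hx
    rw [← hz] at hnx
    exact hx0 (neg_eq_zero.mp (List.eq_of_mem_replicate hnx))

variable {D : Finset (List ℤ)} {m : ℕ}

theorem factorFree_replicate_zero (hD : ∀ p ∈ D, p.length ≤ m)
    (hfree : FactorFree (signedPatterns D) (pad m y)) (j : ℕ) :
    FactorFree (signedPatterns D) (List.replicate j 0) := by
  intro p hp hpj
  have hpm : p <+: List.replicate m 0 :=
    List.prefix_replicate_iff.mpr ⟨length_le_of_mem_signedPatterns hD hp,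
      (List.infix_replicate_iff.mp hpj).2⟩
  exact hfree p hp (hpm.trans (List.prefix_append_of_prefix (List.prefix_append _ _))).isInfix

theorem factorFree_diffWord_flatMap_codeBlock (hD : ∀ p ∈ D, p.length ≤ m)
    (hy : ∀ x ∈ y, x = -1 ∨ x = 0 ∨ x = 1) (hfree : FactorFree (signedPatterns D) (pad m y))
    {bs bs' : List Bool} (hbs : bs.length = bs'.length) :
    FactorFree (signedPatterns D)
      (diffWord (bs.flatMap (codeBlock y (m - 1))) (bs'.flatMap (codeBlock y (m - 1)))) := by
  have hzero := factorFree_replicate_zero hD hfree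
  rw [diffWord_flatMap (fun _ _ => by simp only [length_codeBlock]) hbs]
  simp only [diffWord_codeBlock hy]
  refine FactorFree.flatten_map_append_replicate
    (fun p hp => (length_le_of_mem_signedPatterns hD hp).trans (by omega)) (hzero _) ?_
  rintro ⟨b, b'⟩ -
  split_ifs with hbb' hb
  · simpa [pad] using hzero _
  · exact hfree.mono (pad_infix_pad (Nat.sub_le m 1) y)
  · simpa [pad] using (hfree.mono (pad_infix_pad (Nat.sub_le m 1) y)).map_neg

/-- The words `bs.flatMap (codeBlock y (m - 1))` form a code of rate `1 / (|y| + m - 1)`. -/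
theorem two_pow_le_delta (hD : ∀ p ∈ D, p.length ≤ m) (hy0 : ∃ x ∈ y, x ≠ 0)
    (hy : ∀ x ∈ y, x = -1 ∨ x = 0 ∨ x = 1) (hfree : FactorFree (signedPatterns D) (pad m y))
    (t : ℕ) : 2 ^ t ≤ delta D (t * (y.length + (m - 1))) := by
  have hinj : Function.Injective fun g : Fin t → Bool =>
      (List.ofFn g).flatMap (codeBlock y (m - 1)) := fun g g' h =>
    List.ofFn_injective (List.flatMap_inj_of_length_eq (codeBlock_injective hy0 hy)
      (fun _ _ => by simp only [length_codeBlock]) (by simp) h)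
  have hcode := card_le_delta (D := D) (n := t * (y.length + (m - 1)))
    (C := Finset.univ.image fun g : Fin t → Bool => (List.ofFn g).flatMap (codeBlock y (m - 1)))
    (by simp [List.length_flatMap, length_codeBlock, List.sum_ofFn]) ?_
  · simpa [Finset.card_image_of_injective _ hinj] using hcode
  simp only [AvoidsCode, Finset.mem_image, Finset.mem_univ, true_and]
  rintro _ ⟨g, rfl⟩ _ ⟨g', rfl⟩ -
  exact (factorFree_signedPatterns_iff.mp
    (factorFree_diffWord_flatMap_codeBlock hD hy hfree (by simp))).1

end Code

theorem positive_capacity_lower_bound_general (D : Finset (List ℤ)) (m : ℕ)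
    (hm : (∃ p ∈ D, p.length = m) ∧ ∀ p ∈ D, p.length ≤ m)
    (M : ℕ) (hM : M = ∑ p ∈ D, p.length)
    (hcap : 0 < cap D) :
    1 / (2 * (M : ℝ) + m) ≤ cap D := by
  obtain ⟨⟨p₀, hp₀, rfl⟩, hD⟩ := hm
  have hp₀P : p₀ ∈ signedPatterns D := Finset.mem_union_left _ hp₀
  obtain ⟨y₀, hy₀, hy₀t, hy₀free⟩ := exists_factorFree_pad_of_cap_pos hcap p₀.length
  have hp₀ne : p₀ ≠ [] := fun h => hy₀free p₀ hp₀P (h ▸ List.nil_infix)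
  obtain ⟨y, hsub, hy, hfree, hlen⟩ :=
    exists_short_sublist_factorFree_pad ⟨p₀, hp₀P⟩ p₀.length y₀ hy₀ hy₀free
  have hyM : y.length ≤ 2 * M + 1 := by
    have := card_prefixClosure_le (signedPatterns D)
    have := sum_length_signedPatterns_le (D := D)
    omega
  have hL : 0 < y.length + (p₀.length - 1) := by
    obtain ⟨x, hx, -⟩ := hy
    have := List.length_pos_of_mem hx
    omega
  refine le_trans ?_ (le_cap_of_two_pow_le_delta hL
    (two_pow_le_delta hD hy (fun x hx => hy₀t x (hsub.subset hx)) hfree))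
  apply one_div_le_one_div_of_le (by exact_mod_cast hL)
  have := List.length_pos_iff.mpr hp₀ne
  exact_mod_cast (by omega : y.length + (p₀.length - 1) ≤ 2 * M + p₀.length)

/-- if `cap(D) > 0` then `cap(D) ≥ 1/(2M + m)`, where `m` is the maximal
pattern length and `M` the sum of pattern lengths. -/
theorem positive_capacity_lower_bound (D : Finset (List ℤ)) (hDne : D.Nonempty)
    (hD : ∀ p ∈ D, IsPattern p) (m : ℕ)
    (hm : (∃ p ∈ D, p.length = m) ∧ ∀ p ∈ D, p.length ≤ m)
    (M : ℕ) (hM : M = ∑ p ∈ D, p.length)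
    (hcap : 0 < cap D) :
    1 / (2 * (M : ℝ) + m) ≤ cap D :=
  positive_capacity_lower_bound_general D m hm M hM hcap
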